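/- Let m be a positive even number and let B, B' ⊆ Fin m with |B| = |B'| = m/2. If B = B' then the logical operators X̄(B) = X(v_B) and Z̄(B') = Z(v_{(B')ᶜ}) anticommute: X(v_B) * Z(v_{(B')ᶜ}) = − Z(v_{(B')ᶜ}) * X(v_B); and if B ≠ B' then they commute: X(v_B) * Z(v_{(B')ᶜ}) = Z(v_{(B')ᶜ}) * X(v_B). -/

import Mathlib

/-- The vector `v_A` : its value at a label `x : Fin m → ZMod 2` is `∏_{a ∈ A} x a`. -/
def vA (m : ℕ) (A : Finset (Fin m)) : (Fin m → ZMod 2) → ZMod 2 :=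
  fun x => ∏ a ∈ A, x a

/-- Basis states: functions from qubit labels to `ZMod 2`. -/
abbrev St (m : ℕ) := (Fin m → ZMod 2) → ZMod 2

/-- The Pauli-X type operator `X(w)`: the matrix with `(y, x)` entry `1` if
`y = x + w` and `0` otherwise. -/
noncomputable def Xmat (m : ℕ) (w : St m) : Matrix (St m) (St m) ℂ :=
  Matrix.of fun y x => if y = x + w then 1 else 0

/-- `N(w, x)`: the number of qubits `q` with `w q = 1` and `x q = 1`. -/
def Nwt (m : ℕ) (w x : St m) : ℕ :=
  (Finset.univ.filter (fun q => w q = 1 ∧ x q = 1)).card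

/-- The Pauli-Z type operator `Z(w)`: the diagonal matrix with `(x, x)` entry
`(-1) ^ N(w, x)`. -/
noncomputable def Zmat (m : ℕ) (w : St m) : Matrix (St m) (St m) ℂ :=
  Matrix.diagonal fun x => (-1) ^ Nwt m w x

/-!
`X(w) Z(v) = (-1)^N(v,w) Z(v) X(w)` because `N(v, ·)` is additive modulo 2 (it is the dot
product with `v` over `ZMod 2`). For `v = v_A`, `w = v_B`, `N(v, w)` counts the labels equal to
`1` on `A ∪ B`, so it equals `2 ^ |(A ∪ B)ᶜ|`. With `A = B'ᶜ` this is `2 ^ 0 = 1` when `B = B'`;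
otherwise `B' ⊄ B` since `|B| = |B'|`, so `(B'ᶜ ∪ B)ᶜ = B' \ B` is nonempty and the count is even.
-/

lemma Nwt_cast_eq_dotProduct (m : ℕ) (v x : St m) : (Nwt m v x : ZMod 2) = v ⬝ᵥ x := by
  rw [Nwt, Finset.card_filter]
  push_cast
  refine Finset.sum_congr rfl fun q _ => ?_
  generalize v q = a; generalize x q = b
  revert a b; decide

lemma neg_one_pow_Nwt_add {R : Type*} [Monoid R] [HasDistribNeg R] (m : ℕ) (v x w : St m) :
    (-1 : R) ^ Nwt m v (x + w) = (-1) ^ Nwt m v x * (-1) ^ Nwt m v w := by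
  rw [← pow_add]
  refine neg_one_pow_congr ?_
  rw [← ZMod.natCast_eq_zero_iff_even, ← ZMod.natCast_eq_zero_iff_even, Nat.cast_add,
    Nwt_cast_eq_dotProduct, Nwt_cast_eq_dotProduct, Nwt_cast_eq_dotProduct, dotProduct_add]

lemma Xmat_mul_Zmat (m : ℕ) (w v : St m) :
    Xmat m w * Zmat m v = (-1 : ℂ) ^ Nwt m v w • (Zmat m v * Xmat m w) := by
  ext y x
  simp only [Zmat, Xmat, Matrix.mul_diagonal, Matrix.diagonal_mul, Matrix.smul_apply,
    Matrix.of_apply, smul_eq_mul]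
  split_ifs with h
  · rw [h, neg_one_pow_Nwt_add, one_mul, mul_one, mul_left_comm, ← pow_add,
      Even.neg_one_pow ⟨_, rfl⟩, mul_one]
  · simp

lemma vA_eq_one_iff (m : ℕ) (A : Finset (Fin m)) (x : Fin m → ZMod 2) :
    vA m A x = 1 ↔ ∀ a ∈ A, x a = 1 := by
  have h : ∀ z : ZMod 2, z = 1 ↔ z ≠ 0 := by decide
  simp only [vA, h, Finset.prod_ne_zero_iff]

lemma Nwt_vA_vA (m : ℕ) (A B : Finset (Fin m)) :
    Nwt m (vA m A) (vA m B) = 2 ^ (A ∪ B)ᶜ.card := by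
  classical
  have hsupp : Finset.univ.filter (fun x => vA m A x = 1 ∧ vA m B x = 1) =
      Fintype.piFinset fun a => if a ∈ A ∪ B then {1} else Finset.univ := by
    ext x
    simp only [Finset.mem_filter, Finset.mem_univ, true_and, vA_eq_one_iff,
      ← Finset.forall_mem_union, Fintype.mem_piFinset]
    exact forall_congr' fun a => by split_ifs <;> simp [*]
  rw [Nwt, hsupp, Fintype.card_piFinset]
  simp only [apply_ite Finset.card, Finset.card_singleton, Finset.card_univ, ZMod.card,
    Finset.prod_ite, Finset.prod_const_one, Finset.prod_const, one_mul]
  congr 2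
  ext; simp

theorem stmt5_general (m : ℕ) (B B' : Finset (Fin m))
    (hB : B.card = m / 2) (hB' : B'.card = m / 2) :
    (B = B' →
      Xmat m (vA m B) * Zmat m (vA m B'ᶜ) = -(Zmat m (vA m B'ᶜ) * Xmat m (vA m B))) ∧
    (B ≠ B' →
      Xmat m (vA m B) * Zmat m (vA m B'ᶜ) = Zmat m (vA m B'ᶜ) * Xmat m (vA m B)) := by
  refine ⟨?_, fun hne => ?_⟩
  · rintro rfl
    rw [Xmat_mul_Zmat, Nwt_vA_vA, Finset.compl_union, compl_compl, Finset.inter_compl,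
      Finset.card_empty, pow_zero, pow_one, neg_one_smul]
  · have hB'B : ¬B' ⊆ B := fun h => hne (Finset.eq_of_subset_of_card_le h (by omega)).symm
    have hk : (B'ᶜ ∪ B)ᶜ.card ≠ 0 := by
      rw [Finset.compl_union, compl_compl, ← Finset.sdiff_eq_inter_compl]
      exact (Finset.sdiff_nonempty.2 hB'B).card_pos.ne'
    rw [Xmat_mul_Zmat, Nwt_vA_vA, (Nat.even_pow.2 ⟨even_two, hk⟩).neg_one_pow, one_smul]

/-- For `|B| = |B'| = m/2`, the logical operators `X̄(B) = X(v_B)` and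
`Z̄(B') = Z(v_{(B')ᶜ})` anticommute when `B = B'` and commute when `B ≠ B'`. -/
theorem stmt5 (m : ℕ) (hm : Even m) (h0 : 0 < m) (B B' : Finset (Fin m))
    (hB : B.card = m / 2) (hB' : B'.card = m / 2) :
    (B = B' →
      Xmat m (vA m B) * Zmat m (vA m B'ᶜ) = -(Zmat m (vA m B'ᶜ) * Xmat m (vA m B))) ∧
    (B ≠ B' →
      Xmat m (vA m B) * Zmat m (vA m B'ᶜ) = Zmat m (vA m B'ᶜ) * Xmat m (vA m B)) :=
  stmt5_general m B B' hB hB'
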